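/- Let λ₁ > 0, λ₂ > 0, α > 0 and θ ∈ [-1, 1], let D = λ₂α/(λ₁+λ₂α) + θλ₁·(2/(2λ₁+λ₂α) + 1/(λ₁+2λ₂α) - 2/(λ₁+λ₂α)), K = λ₁/D, and set p₁ = K/λ₁, p₂ = -K(1+θ)/(λ₁+λ₂α), p₃ = 2Kθ/(2λ₁+λ₂α), p₄ = Kθ/(λ₁+2λ₂α), p₅ = -Kθ/(λ₁+λ₂α). Then for every real t with t < λ₁, ∫₀^∞ e^{tx} · K e^{-λ₁x}(1 - e^{-λ₂αx})(1 - θe^{-λ₂αx}(1 - 2e^{-λ₁x})) dx = p₁λ₁/(λ₁-t) + p₂(λ₁+λ₂α)/(λ₁+λ₂α-t) + p₃(2λ₁+λ₂α)/(2λ₁+λ₂α-t) + p₄(λ₁+2λ₂α)/(λ₁+2λ₂α-t) + 2p₅(λ₁+λ₂α)/(2λ₁+2λ₂α-t). -/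
import Mathlib

open MeasureTheory Real

lemma int_exp_rate {b : ℝ} (hb : 0 < b) :
    ∫ x in Set.Ioi (0 : ℝ), Real.exp (-(b * x)) = 1 / b := by
  have := integral_comp_mul_left_Ioi (fun y => Real.exp (-y)) 0 hb
  simp only [mul_zero, integral_exp_neg_Ioi_zero, smul_eq_mul, mul_one] at this
  rw [this, one_div]

lemma int_exp_sub {a t : ℝ} (h : t < a) :
    ∫ x in Set.Ioi (0 : ℝ), Real.exp ((t - a) * x) = 1 / (a - t) := by
  have hb : 0 < a - t := by linarith
  have := int_exp_rate hb
  simpa [show ∀ x : ℝ, -((a - t) * x) = (t - a) * x by intro x; ring] using this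

lemma integ_exp_sub {a t : ℝ} (h : t < a) :
    IntegrableOn (fun x => Real.exp ((t - a) * x)) (Set.Ioi (0 : ℝ)) := by
  have hb : 0 < a - t := by linarith
  have := exp_neg_integrableOn_Ioi 0 hb
  simpa [show ∀ x : ℝ, -((a - t) * x) = (t - a) * x by intro x; ring] using this

theorem gwed_mgf
    (l₁ l₂ α θ : ℝ) (hl₁ : 0 < l₁) (hl₂ : 0 < l₂) (hα : 0 < α)
    (hθ : θ ∈ Set.Icc (-1 : ℝ) 1)
    (D K p₁ p₂ p₃ p₄ p₅ : ℝ)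
    (hD : D = l₂ * α / (l₁ + l₂ * α)
        + θ * l₁ * (2 / (2 * l₁ + l₂ * α) + 1 / (l₁ + 2 * l₂ * α)
          - 2 / (l₁ + l₂ * α)))
    (hK : K = l₁ / D)
    (hp₁ : p₁ = K / l₁)
    (hp₂ : p₂ = -(K * (1 + θ)) / (l₁ + l₂ * α))
    (hp₃ : p₃ = 2 * K * θ / (2 * l₁ + l₂ * α))
    (hp₄ : p₄ = K * θ / (l₁ + 2 * l₂ * α))
    (hp₅ : p₅ = -(K * θ) / (l₁ + l₂ * α)) :
    ∀ t : ℝ, t < l₁ →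
      (∫ x in Set.Ioi (0 : ℝ),
          Real.exp (t * x) * (K * Real.exp (-l₁ * x) * (1 - Real.exp (-l₂ * α * x))
            * (1 - θ * Real.exp (-l₂ * α * x) * (1 - 2 * Real.exp (-l₁ * x)))))
        = p₁ * l₁ / (l₁ - t)
          + p₂ * (l₁ + l₂ * α) / (l₁ + l₂ * α - t)
          + p₃ * (2 * l₁ + l₂ * α) / (2 * l₁ + l₂ * α - t)
          + p₄ * (l₁ + 2 * l₂ * α) / (l₁ + 2 * l₂ * α - t)
          + 2 * p₅ * (l₁ + l₂ * α) / (2 * l₁ + 2 * l₂ * α - t) := by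
  intro t ht
  have hb : 0 < l₂ * α := mul_pos hl₂ hα
  have hr2 : (2 : ℝ) * l₂ * α = 2 * (l₂ * α) := by ring
  have h1 : t < l₁ := ht
  have h2 : t < l₁ + l₂ * α := by linarith
  have h3 : t < 2 * l₁ + l₂ * α := by linarith
  have h4 : t < l₁ + 2 * l₂ * α := by rw [hr2] at *; linarith
  have h5 : t < 2 * l₁ + 2 * l₂ * α := by rw [hr2] at *; linarith
  have key : ∀ x : ℝ,
      Real.exp (t * x) * (K * Real.exp (-l₁ * x) * (1 - Real.exp (-l₂ * α * x))
        * (1 - θ * Real.exp (-l₂ * α * x) * (1 - 2 * Real.exp (-l₁ * x))))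
      = K * Real.exp ((t - l₁) * x)
        + (-(K * (1 + θ)) * Real.exp ((t - (l₁ + l₂ * α)) * x)
        + (2 * K * θ * Real.exp ((t - (2 * l₁ + l₂ * α)) * x)
        + (K * θ * Real.exp ((t - (l₁ + 2 * l₂ * α)) * x)
        + -(2 * K * θ) * Real.exp ((t - (2 * l₁ + 2 * l₂ * α)) * x)))) := by
    intro x
    rw [show (t - l₁) * x = t * x + -l₁ * x by ring,
        show (t - (l₁ + l₂ * α)) * x = t * x + (-l₁ * x + -l₂ * α * x) by ring,
        show (t - (2 * l₁ + l₂ * α)) * x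
          = t * x + (-l₁ * x + (-l₁ * x + -l₂ * α * x)) by ring,
        show (t - (l₁ + 2 * l₂ * α)) * x
          = t * x + (-l₁ * x + (-l₂ * α * x + -l₂ * α * x)) by ring,
        show (t - (2 * l₁ + 2 * l₂ * α)) * x
          = t * x + (-l₁ * x + (-l₁ * x + (-l₂ * α * x + -l₂ * α * x))) by ring]
    simp only [Real.exp_add]
    ring
  have I1 := (integ_exp_sub h1).const_mul K
  have I2 := (integ_exp_sub h2).const_mul (-(K * (1 + θ)))
  have I3 := (integ_exp_sub h3).const_mul (2 * K * θ)
  have I4 := (integ_exp_sub h4).const_mul (K * θ)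
  have I5 := (integ_exp_sub h5).const_mul (-(2 * K * θ))
  have I45 : Integrable (fun x => K * θ * Real.exp ((t - (l₁ + 2 * l₂ * α)) * x)
      + -(2 * K * θ) * Real.exp ((t - (2 * l₁ + 2 * l₂ * α)) * x))
      (volume.restrict (Set.Ioi 0)) := I4.add I5
  have I345 : Integrable (fun x => 2 * K * θ * Real.exp ((t - (2 * l₁ + l₂ * α)) * x)
      + (K * θ * Real.exp ((t - (l₁ + 2 * l₂ * α)) * x)
        + -(2 * K * θ) * Real.exp ((t - (2 * l₁ + 2 * l₂ * α)) * x)))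
      (volume.restrict (Set.Ioi 0)) := I3.add I45
  have I2345 : Integrable (fun x => -(K * (1 + θ)) * Real.exp ((t - (l₁ + l₂ * α)) * x)
      + (2 * K * θ * Real.exp ((t - (2 * l₁ + l₂ * α)) * x)
        + (K * θ * Real.exp ((t - (l₁ + 2 * l₂ * α)) * x)
          + -(2 * K * θ) * Real.exp ((t - (2 * l₁ + 2 * l₂ * α)) * x))))
      (volume.restrict (Set.Ioi 0)) := I2.add I345
  rw [integral_congr_ae (Filter.Eventually.of_forall fun x => key x),
      integral_add I1 I2345,
      integral_add I2 I345,
      integral_add I3 I45,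
      integral_add I4 I5,
      integral_const_mul, integral_const_mul, integral_const_mul,
      integral_const_mul, integral_const_mul,
      int_exp_sub h1, int_exp_sub h2, int_exp_sub h3, int_exp_sub h4, int_exp_sub h5]
  have n1 : l₁ - t ≠ 0 := by linarith
  have n2 : l₁ + l₂ * α - t ≠ 0 := by linarith
  have n3 : 2 * l₁ + l₂ * α - t ≠ 0 := by linarith
  have n4 : l₁ + 2 * l₂ * α - t ≠ 0 := by linarith
  have n5 : 2 * l₁ + 2 * l₂ * α - t ≠ 0 := by linarith
  have m1 : l₁ ≠ 0 := ne_of_gt hl₁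
  have m2 : l₁ + l₂ * α ≠ 0 := by positivity
  have m3 : 2 * l₁ + l₂ * α ≠ 0 := by positivity
  have m4 : l₁ + 2 * l₂ * α ≠ 0 := by positivity
  subst hp₁ hp₂ hp₃ hp₄ hp₅
  field_simp
  ring
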